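/- arXiv:math/0412348 — 2 statements merged into one kernel-verified Lean document; each statement's English description precedes it below -/
import Mathlib

section
/- For every i ∈ ℕ, every p ∈ [0,1], every n ∈ ℕ and every sample point ω ∈ Ω: if _pX̄^{(∞)}_n(ω) < _pX̄^{(i)}_n(ω), then _pX^{(∞)}_n(m)(ω) = 0 for every m ∈ ℤ_n with m ≥ n − 2i. Equivalently, the event { _pX̄^{(i)}_n ≠ _pX̄^{(∞)}_n } is contained in the event that the oriented percolation process at time n has no infected site at any m ≥ n − 2i. -/
open MeasureTheory ProbabilityTheory Filter Set
open scoped ENat ENNReal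

noncomputable section

/-- Direction of a bond: `true` = right (`+1`), `false` = left (`-1`). -/
def dir (j : Bool) : ℤ := if j then 1 else -1

/-- An environment: a realization of the family of uniform random variables
`ξ^j_{n,m}`, indexed by time `n`, space `m` and direction `j`. -/
abbrev Env := ℕ → ℤ → Bool → ℝ

/-- The bond from site `(n,m)` in direction `j` is open at level `p`,
i.e. the Bernoulli variable `_pξ^j_{n,m} = 1_{ξ^j_{n,m} ≤ p}` equals `1`. -/
def bondOpen (p : ℝ) (u : Env) (n : ℕ) (m : ℤ) (j : Bool) : Bool :=
  @decide (u n m j ≤ p) (Classical.propDecidable _)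

/-- The position of the right edge after one step from configuration `c` at time `n`:
`sup { m + j : c m = 1, bond (n,m,j) open }`. -/
def nextEdge (p : ℝ) (u : Env) (n : ℕ) (c : ℤ → Bool) : ℤ :=
  sSup {x : ℤ | ∃ m j, c m = true ∧ bondOpen p u n m j = true ∧ x = m + dir j}

/-- Forced (re)infection indicator for a site lying at (even) distance `d`
behind the new edge, when `d > 2i`; for `i = ∞` there is no forced infection. -/
def forced (i : ℕ∞) (d : ℤ) : Bool :=
  @decide (Even d ∧ 2 * i < (d.toNat : ℕ∞)) (Classical.propDecidable _)

/-- The strengthened discrete-time contact process (SDTCP) of order `i ∈ ℕ ∪ {∞}`,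
with infection parameter `p`, environment `u`, and initial configuration `η`. -/
def Xproc (i : ℕ∞) (p : ℝ) (u : Env) (η : ℤ → Bool) : ℕ → ℤ → Bool
  | 0 => η
  | n + 1 => fun m =>
      (Xproc i p u η n (m - 1) && bondOpen p u n (m - 1) true) ||
      (Xproc i p u η n (m + 1) && bondOpen p u n (m + 1) false) ||
      forced i (nextEdge p u n (Xproc i p u η n) - m)

/-- The right edge process, with the convention `edge 0 = 0`. -/
def edge (i : ℕ∞) (p : ℝ) (u : Env) (η : ℤ → Bool) : ℕ → ℤ
  | 0 => 0
  | n + 1 => nextEdge p u n (Xproc i p u η n)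

/-- The standard initial configuration `1_{· ≤ 0}` on the even sites. -/
def η₀ : ℤ → Bool := fun m => @decide (m ≤ 0 ∧ Even m) (Classical.propDecidable _)

/-- States of the induced Markov chain of order `i`: configurations of the `i`
sites at distances `2, 4, …, 2i` behind the right edge. -/
abbrev IMCState (i : ℕ) := Fin i → Bool

/-- The induced Markov chain: `Y n (j) = X n (edge n − 2(j+1))`. -/
def Yproc (i : ℕ) (p : ℝ) (u : Env) (η : ℤ → Bool) (n : ℕ) : IMCState i :=
  fun j => Xproc (i : ℕ∞) p u η n (edge (i : ℕ∞) p u η n - 2 * ((j : ℤ) + 1))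

/-- The initial configuration `η_σ` associated with a state `σ` of the induced
Markov chain: edge at `0`, configuration `σ` at `−2, …, −2i`, everything
infected below `−2i`, everything healthy above `0`. -/
def ησ (i : ℕ) (σ : IMCState i) : ℤ → Bool := fun m =>
  @decide (Even m ∧ (m = 0 ∨ m < -(2 * (i : ℤ)) ∨
      ∃ j : Fin i, m = -(2 * ((j : ℤ) + 1)) ∧ σ j = true))
    (Classical.propDecidable _)

variable {Ω : Type*}

/-- The probabilistic set-up: `ℙ` is a probability measure and the `ξ^j_{n,m}`
are i.i.d. random variables, uniformly distributed on `[0,1]`. -/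
def UniformBonds [MeasureSpace Ω] (ξ : Ω → Env) : Prop :=
  IsProbabilityMeasure (ℙ : Measure Ω) ∧
  (∀ n m j, Measurable fun ω => ξ ω n m j) ∧
  iIndepFun (m := fun _ : ℕ × ℤ × Bool => (inferInstance : MeasurableSpace ℝ))
    (fun v ω => ξ ω v.1 v.2.1 v.2.2) ℙ ∧
  ∀ n m j, (ℙ : Measure Ω).map (fun ω => ξ ω n m j)
      = (volume : Measure ℝ).restrict (Set.Icc 0 1)

/-- Transition probability `q^{(i)}_{στ}(p)` of the induced Markov chain:
the probability that one step of the chain started from state `σ` leads to `τ`. -/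
def kernel [MeasureSpace Ω] (ξ : Ω → Env) (i : ℕ) (p : ℝ) (σ τ : IMCState i) : ℝ :=
  (ℙ {ω | Yproc i p (ξ ω) (ησ i σ) 1 = τ}).toReal

/-- `π` is a stationary probability distribution for the induced Markov chain. -/
def IsStationaryIMC [MeasureSpace Ω] (ξ : Ω → Env) (i : ℕ) (p : ℝ)
    (π : IMCState i → ℝ) : Prop :=
  (∀ σ, 0 ≤ π σ) ∧ (∑ σ, π σ = 1) ∧
    ∀ τ, (∑ σ, π σ * kernel ξ i p σ τ) = π τ

/-- The mean jump `M^{(i)}_σ(p)` of the right edge from state `σ`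
(Definition 2.4): `Σ_k Σ_τ (1 − 2k) P^{(i)}_{(σ,τ,k)}(p)`. -/
def meanJump [MeasureSpace Ω] (ξ : Ω → Env) (i : ℕ) (p : ℝ) (σ : IMCState i) : ℝ :=
  ∑' k : ℕ, ∑ τ : IMCState i, (1 - 2 * (k : ℝ)) *
    (ℙ {ω | edge (i : ℕ∞) p (ξ ω) (ησ i σ) 1 = 1 - 2 * (k : ℤ) ∧
        Yproc i p (ξ ω) (ησ i σ) 1 = τ}).toReal

/-- The mean edge drift `M^{(i)}(p)` computed from a stationary measure `π`
(Definition 2.5). -/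
def meanDrift [MeasureSpace Ω] (ξ : Ω → Env) (i : ℕ) (p : ℝ)
    (π : IMCState i → ℝ) : ℝ :=
  ∑ σ, meanJump ξ i p σ * π σ

/-- `a ∈ ℝ ∪ {±∞}` is the almost sure asymptotic speed of the right edge of the
process of order `i ∈ ℕ ∪ {∞}` started from `1_{· ≤ 0}`. -/
def IsEdgeSpeed [MeasureSpace Ω] (ξ : Ω → Env) (i : ℕ∞) (p : ℝ) (a : EReal) : Prop :=
  ∀ᵐ ω ∂ℙ, Tendsto (fun n : ℕ => (((edge i p (ξ ω) η₀ n : ℤ) : ℝ) / n : EReal))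
    atTop (nhds a)

/-- `pc i = p_c^{(i)}` is, for each `i ∈ ℕ`, a root in `(0,1]` of the mean edge
drift `M^{(i)}` (computed from a stationary measure of the induced chain). -/
def IsCriticalSeq [MeasureSpace Ω] (ξ : Ω → Env) (pc : ℕ → ℝ) : Prop :=
  ∀ i, pc i ∈ Set.Ioc (0 : ℝ) 1 ∧
    ∃ π, IsStationaryIMC ξ i (pc i) π ∧ meanDrift ξ i (pc i) π = 0

/-!
The order-`i` process and oriented percolation use the same bonds, so the former dominates the
latter, and the two differ only through forced infections, which occur more than `2i` behind the
new edge, itself at most `n + 1`. By induction the two configurations therefore agree at every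
site `m ≥ n - 2i - 1` at time `n`. An infected percolation site `m₀ ≥ n - 2i` is the target of an
open bond, so it lies at or below both edges; every extra bond of the order-`i` process starts at a site
`< n - 2i - 1` and ends strictly below `m₀`, hence cannot move the edge.
-/

def openTargets (p : ℝ) (u : Env) (n : ℕ) (c : ℤ → Bool) : Set ℤ :=
  {x | ∃ m j, c m = true ∧ bondOpen p u n m j = true ∧ x = m + dir j}

lemma nextEdge_eq_sSup_openTargets (p : ℝ) (u : Env) (n : ℕ) (c : ℤ → Bool) :
    nextEdge p u n c = sSup (openTargets p u n c) := rfl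

lemma dir_le_one (j : Bool) : dir j ≤ 1 := by
  cases j <;> simp [dir]

lemma openTargets_mono {p : ℝ} {u : Env} {n : ℕ} {c c' : ℤ → Bool}
    (h : ∀ m, c m = true → c' m = true) : openTargets p u n c ⊆ openTargets p u n c' := by
  rintro x ⟨m, j, hm, hopen, rfl⟩
  exact ⟨m, j, h m hm, hopen, rfl⟩

-- The bound is stated at `n + 1 ≥ 0` because `sSup ∅ = 0` in `ℤ`.
lemma nextEdge_le_of_eq_false {p : ℝ} {u : Env} {n : ℕ} {c : ℤ → Bool}
    (hc : ∀ m : ℤ, (n : ℤ) < m → c m = false) :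
    nextEdge p u n c ≤ (n : ℤ) + 1 := by
  rw [nextEdge_eq_sSup_openTargets]
  rcases (openTargets p u n c).eq_empty_or_nonempty with hS | hS
  · rw [hS, Int.csSup_empty]
    positivity
  · refine csSup_le hS ?_
    rintro x ⟨m, j, hm, -, rfl⟩
    have hmn : m ≤ n := by
      by_contra! h
      simp [hc m h] at hm
    linarith [dir_le_one j]

lemma forced_top (d : ℤ) : forced ⊤ d = false := by
  refine @decide_eq_false _ (Classical.propDecidable _) ?_
  rintro ⟨-, h⟩
  rw [ENat.mul_top two_ne_zero] at h
  exact not_top_lt h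

lemma forced_eq_false_of_nonpos (i : ℕ∞) {d : ℤ} (h : d ≤ 0) : forced i d = false := by
  refine @decide_eq_false _ (Classical.propDecidable _) ?_
  rintro ⟨-, hlt⟩
  simp [Int.toNat_of_nonpos h] at hlt

lemma forced_coe_eq_false_of_le (i : ℕ) {d : ℤ} (h : d ≤ 2 * i + 1) :
    forced (i : ℕ∞) d = false := by
  refine @decide_eq_false _ (Classical.propDecidable _) ?_
  rintro ⟨he, hlt⟩
  have h2 : 2 * i < d.toNat := by exact_mod_cast hlt
  rw [Int.even_iff] at he
  omega

section Coupling

variable (p : ℝ) (u : Env)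

lemma Xproc_top_succ (η : ℤ → Bool) (n : ℕ) (m : ℤ) :
    Xproc ⊤ p u η (n + 1) m =
      (Xproc ⊤ p u η n (m - 1) && bondOpen p u n (m - 1) true ||
        Xproc ⊤ p u η n (m + 1) && bondOpen p u n (m + 1) false) := by
  simp only [Xproc, forced_top, Bool.or_false]

lemma mem_openTargets_of_Xproc_top_succ {η : ℤ → Bool} {n : ℕ} {m : ℤ}
    (h : Xproc ⊤ p u η (n + 1) m = true) : m ∈ openTargets p u n (Xproc ⊤ p u η n) := by
  simp only [Xproc_top_succ, Bool.or_eq_true, Bool.and_eq_true] at h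
  rcases h with ⟨hX, hopen⟩ | ⟨hX, hopen⟩
  · exact ⟨m - 1, true, hX, hopen, by simp [dir]⟩
  · exact ⟨m + 1, false, hX, hopen, by simp [dir]⟩

lemma Xproc_eq_false_of_lt (i : ℕ∞) (n : ℕ) {m : ℤ} (hm : (n : ℤ) < m) :
    Xproc i p u η₀ n m = false := by
  induction n generalizing m with
  | zero =>
    refine @decide_eq_false _ (Classical.propDecidable _) ?_
    rintro ⟨h, -⟩
    simp at hm
    omega
  | succ n ih =>
    push_cast at hm
    have hE := nextEdge_le_of_eq_false (p := p) (u := u) (c := Xproc i p u η₀ n) fun _ => ih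
    simp only [Xproc]
    rw [ih (by omega), ih (by omega), forced_eq_false_of_nonpos i (by omega)]
    simp

lemma Xproc_top_le (i : ℕ∞) (η : ℤ → Bool) (n : ℕ) {m : ℤ}
    (h : Xproc ⊤ p u η n m = true) : Xproc i p u η n m = true := by
  induction n generalizing m with
  | zero => exact h
  | succ n ih =>
    simp only [Xproc_top_succ, Bool.or_eq_true, Bool.and_eq_true] at h
    simp only [Xproc, Bool.or_eq_true, Bool.and_eq_true]
    rcases h with ⟨hX, hopen⟩ | ⟨hX, hopen⟩
    · exact Or.inl (Or.inl ⟨ih hX, hopen⟩)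
    · exact Or.inl (Or.inr ⟨ih hX, hopen⟩)

lemma Xproc_coe_eq_Xproc_top (i : ℕ) (n : ℕ) {m : ℤ} (hm : (n : ℤ) - 2 * i - 1 ≤ m) :
    Xproc (i : ℕ∞) p u η₀ n m = Xproc ⊤ p u η₀ n m := by
  induction n generalizing m with
  | zero => rfl
  | succ n ih =>
    push_cast at hm
    have hE := nextEdge_le_of_eq_false (p := p) (u := u) (c := Xproc (i : ℕ∞) p u η₀ n)
      fun _ => Xproc_eq_false_of_lt p u (i : ℕ∞) n
    simp only [Xproc]
    rw [ih (by omega), ih (by omega), forced_top, forced_coe_eq_false_of_le i (by omega)]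

lemma edge_coe_eq_edge_top (i : ℕ) (n : ℕ) {m₀ : ℤ} (hm₀ : (n : ℤ) - 2 * i ≤ m₀)
    (hX : Xproc ⊤ p u η₀ n m₀ = true) :
    edge (i : ℕ∞) p u η₀ n = edge ⊤ p u η₀ n := by
  cases n with
  | zero => rfl
  | succ n =>
    push_cast at hm₀
    simp only [edge, nextEdge_eq_sSup_openTargets]
    have hm₀_mem := mem_openTargets_of_Xproc_top_succ p u hX
    refine csSup_eq_csSup_of_forall_exists_le ?_ ?_
    · rintro x ⟨m, j, hm, hopen, rfl⟩
      by_cases hwin : (n : ℤ) - 2 * i - 1 ≤ m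
      · rw [Xproc_coe_eq_Xproc_top p u i n hwin] at hm
        exact ⟨_, ⟨m, j, hm, hopen, rfl⟩, le_rfl⟩
      · exact ⟨m₀, hm₀_mem, by linarith [dir_le_one j]⟩
    · exact fun y hy => ⟨y, openTargets_mono (fun _ => Xproc_top_le p u (i : ℕ∞) η₀ n) hy, le_rfl⟩

end Coupling

theorem edge_differ_implies_empty_general (u : Env)
    (i : ℕ) (p : ℝ) (n : ℕ) :
    (edge ⊤ p u η₀ n < edge (i : ℕ∞) p u η₀ n →
      ∀ m : ℤ, Even ((n : ℤ) + m) → (n : ℤ) - 2 * i ≤ m →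
        Xproc ⊤ p u η₀ n m = false) ∧
    (edge (i : ℕ∞) p u η₀ n ≠ edge ⊤ p u η₀ n →
      ∀ m : ℤ, Even ((n : ℤ) + m) → (n : ℤ) - 2 * i ≤ m →
        Xproc ⊤ p u η₀ n m = false) := by
  have hne : edge (i : ℕ∞) p u η₀ n ≠ edge ⊤ p u η₀ n →
      ∀ m : ℤ, Even ((n : ℤ) + m) → (n : ℤ) - 2 * i ≤ m →
        Xproc ⊤ p u η₀ n m = false :=
    fun hne m _ hm => Bool.eq_false_iff.mpr fun hX => hne (edge_coe_eq_edge_top p u i n hm hX)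
  exact ⟨fun hlt => hne hlt.ne', hne⟩

/-- For every `i ∈ ℕ`, every `p ∈ [0,1]`, every `n ∈ ℕ` and every sample point
(environment) `u`: if `_pX̄^{(∞)}_n < _pX̄^{(i)}_n`, then
`_pX^{(∞)}_n(m) = 0` for every `m ∈ ℤ_n` with `m ≥ n − 2i`; equivalently, on
the event where the two right edges differ, the oriented percolation process
at time `n` has no infected site at any `m ≥ n − 2i`. -/
theorem edge_differ_implies_empty (u : Env)
    (hu : ∀ n m j, u n m j ∈ Set.Icc (0 : ℝ) 1)
    (i : ℕ) (p : ℝ) (hp : p ∈ Set.Icc (0 : ℝ) 1) (n : ℕ) :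
    (edge ⊤ p u η₀ n < edge (i : ℕ∞) p u η₀ n →
      ∀ m : ℤ, Even ((n : ℤ) + m) → (n : ℤ) - 2 * i ≤ m →
        Xproc ⊤ p u η₀ n m = false) ∧
    (edge (i : ℕ∞) p u η₀ n ≠ edge ⊤ p u η₀ n →
      ∀ m : ℤ, Even ((n : ℤ) + m) → (n : ℤ) - 2 * i ≤ m →
        Xproc ⊤ p u η₀ n m = false) :=
  edge_differ_implies_empty_general u i p n
end
end

section
/- (Lemma 3.8.) For every fixed n ∈ ℕ and every p ∈ (0,1], lim_{i→∞} E[ _pX̄^{(i)}_n ] = E[ _pX̄^{(∞)}_n ]; moreover the convergence is monotone: E[ _pX̄^{(i)}_n ] decreases in i to E[ _pX̄^{(∞)}_n ]. -/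
/-!
Pathwise, lowering the order `i` only adds forced infections. A forced infection sits at even
distance behind the edge, so an infected site `m` at time `k` always has `m + k` even, and an
induction then shows that the configurations, hence the edges, decrease in `i`. Since the edge is
at most `k` at time `k`, forced infections of order `i` stay below `k - 2i`. If the left-going
path from the initially infected site `-2j` is open during the first `n` steps, it keeps every
edge above `-2j - k`, so for `i ≥ n + j` forced infections never reach the edge before time `n`
and `X̄^{(i)}_n = X̄^{(∞)}_n`. The same path gives `|X̄^{(i)}_n| ≤ 2J + n` for the first such open
path `J`; distinct paths use disjoint bonds, so `J` has a geometric tail, and dominated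
convergence concludes.
-/

open MeasureTheory ProbabilityTheory Filter Set
open scoped ENat ENNReal

noncomputable section

variable {Ω : Type*}

lemma dir_eq_one_or_neg_one (j : Bool) : dir j = 1 ∨ dir j = -1 := by
  cases j <;> simp [dir]

lemma forced_natCast_of_le {i : ℕ} {d : ℤ} (h : d ≤ 2 * i) : forced i d = false := by
  simp only [forced, decide_eq_false_iff_not, not_and, not_lt]
  intro _
  exact_mod_cast (show d.toNat ≤ 2 * i by omega)

lemma pos_of_forced {i : ℕ∞} {d : ℤ} (h : forced i d = true) : 0 < d := by
  simp only [forced, decide_eq_true_eq] at h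
  by_contra! hd
  simp [Int.toNat_of_nonpos hd] at h

lemma even_of_forced {i : ℕ∞} {d : ℤ} (h : forced i d = true) : Even d := by
  simp only [forced, decide_eq_true_eq] at h
  exact h.1

lemma forced_anti {i i' : ℕ∞} (hi : i ≤ i') {d d' : ℤ} (hd : d' ≤ d) (hpar : Even (d - d'))
    (h : forced i' d' = true) : forced i d = true := by
  simp only [forced, decide_eq_true_eq] at h ⊢
  refine ⟨by simpa using hpar.add h.1, ?_⟩
  calc 2 * i ≤ 2 * i' := by gcongr
    _ < d'.toNat := h.2
    _ ≤ d.toNat := by exact_mod_cast Int.toNat_le_toNat hd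

section NextEdge

variable {p : ℝ} {u : Env} {n : ℕ} {c c' : ℤ → Bool} {K : ℤ}

def edgeCandidates (p : ℝ) (u : Env) (n : ℕ) (c : ℤ → Bool) : Set ℤ :=
  {x : ℤ | ∃ m j, c m = true ∧ bondOpen p u n m j = true ∧ x = m + dir j}

lemma nextEdge_eq_sSup : nextEdge p u n c = sSup (edgeCandidates p u n c) := rfl

lemma edgeCandidates_subset_Iic (hc : ∀ m, c m = true → m ≤ K) :
    edgeCandidates p u n c ⊆ Set.Iic (K + 1) := by
  rintro x ⟨m, j, hm, -, rfl⟩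
  have := hc m hm
  rcases dir_eq_one_or_neg_one j with h | h <;> simp only [Set.mem_Iic, h] <;> omega

lemma bddAbove_edgeCandidates (hc : ∀ m, c m = true → m ≤ K) :
    BddAbove (edgeCandidates p u n c) :=
  ⟨K + 1, edgeCandidates_subset_Iic hc⟩

lemma nextEdge_le (hc : ∀ m, c m = true → m ≤ K) (hK : 0 ≤ K + 1) :
    nextEdge p u n c ≤ K + 1 := by
  rcases (edgeCandidates p u n c).eq_empty_or_nonempty with h | h
  · rwa [nextEdge_eq_sSup, h, Int.csSup_empty]
  · exact csSup_le h (edgeCandidates_subset_Iic hc)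

lemma le_nextEdge (hc : ∀ m, c m = true → m ≤ K) {x : ℤ} (hx : x ∈ edgeCandidates p u n c) :
    x ≤ nextEdge p u n c :=
  le_csSup (bddAbove_edgeCandidates hc) hx

lemma nextEdge_mem (hc : ∀ m, c m = true → m ≤ K) (hne : (edgeCandidates p u n c).Nonempty) :
    nextEdge p u n c ∈ edgeCandidates p u n c :=
  Int.csSup_mem hne (bddAbove_edgeCandidates hc)

lemma edgeCandidates_mono (hcc' : ∀ m, c m = true → c' m = true) :
    edgeCandidates p u n c ⊆ edgeCandidates p u n c' := by
  rintro x ⟨m, j, hm, hb, rfl⟩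
  exact ⟨m, j, hcc' m hm, hb, rfl⟩

lemma nextEdge_mono (hcc' : ∀ m, c m = true → c' m = true) (hc' : ∀ m, c' m = true → m ≤ K)
    (hne : (edgeCandidates p u n c).Nonempty) : nextEdge p u n c ≤ nextEdge p u n c' :=
  csSup_le_csSup (bddAbove_edgeCandidates hc') hne (edgeCandidates_mono hcc')

lemma nextEdge_eq_of_agree_above {T : ℤ} (hcc' : ∀ m, c m = true → c' m = true)
    (hagree : ∀ m, T < m → c' m = c m) (hc' : ∀ m, c' m = true → m ≤ K)
    (hne : (edgeCandidates p u n c).Nonempty) (hT : T + 1 ≤ nextEdge p u n c) :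
    nextEdge p u n c' = nextEdge p u n c := by
  have hc : ∀ m, c m = true → m ≤ K := fun m hm => hc' m (hcc' m hm)
  refine le_antisymm (csSup_le (hne.mono (edgeCandidates_mono hcc')) ?_)
    (nextEdge_mono hcc' hc' hne)
  rintro x ⟨m, j, hm, hb, rfl⟩
  by_cases hmT : T < m
  · exact le_nextEdge hc ⟨m, j, hagree m hmT ▸ hm, hb, rfl⟩
  · rcases dir_eq_one_or_neg_one j with h | h <;> rw [h] <;> omega

lemma even_nextEdge_add {a : ℕ} (hc : ∀ m, c m = true → m ≤ K)
    (hpar : ∀ m, c m = true → Even (m + a)) (hne : (edgeCandidates p u n c).Nonempty) :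
    Even (nextEdge p u n c + (a + 1 : ℕ)) := by
  obtain ⟨m, j, hm, -, he⟩ := nextEdge_mem hc hne
  have := Int.even_iff.1 (hpar m hm)
  rw [he, Int.even_iff]
  rcases dir_eq_one_or_neg_one j with h | h <;> rw [h] <;> push_cast <;> omega

end NextEdge

section Configurations

variable {i : ℕ∞} {p : ℝ} {u : Env} {k : ℕ} {m : ℤ}

lemma Xproc_le (h : Xproc i p u η₀ k m = true) : m ≤ k := by
  induction k generalizing m with
  | zero =>
    simp only [Xproc, η₀, decide_eq_true_eq] at h
    exact_mod_cast h.1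
  | succ k ih =>
    simp only [Xproc, Bool.or_eq_true, Bool.and_eq_true] at h
    rcases h with (⟨h, -⟩ | ⟨h, -⟩) | h
    · have := ih h; push_cast; omega
    · have := ih h; push_cast; omega
    · have := pos_of_forced h
      have := nextEdge_le (p := p) (u := u) (n := k) (c := Xproc i p u η₀ k) (fun _ => ih)
        (by positivity)
      push_cast; omega

lemma Xproc_bounded : ∀ m, Xproc i p u η₀ k m = true → m ≤ k := fun _ => Xproc_le

lemma edge_le : edge i p u η₀ k ≤ k := by
  cases k with
  | zero => rfl
  | succ k => exact_mod_cast nextEdge_le Xproc_bounded (by positivity)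

lemma Xproc_eq_top_of_lt {i : ℕ} (hm : (k : ℤ) - 2 * i < m) :
    Xproc i p u η₀ k m = Xproc ⊤ p u η₀ k m := by
  induction k generalizing m with
  | zero => rfl
  | succ k ih =>
    have hforced : forced i (nextEdge p u k (Xproc i p u η₀ k) - m) = false := by
      have : edge i p u η₀ (k + 1) ≤ (k + 1 : ℕ) := edge_le
      exact forced_natCast_of_le (by simp only [edge] at this; push_cast at this hm; omega)
    simp only [Xproc, ih (m := m - 1) (by push_cast at hm; omega),
      ih (m := m + 1) (by push_cast at hm; omega), hforced, forced_top]

end Configurations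

/-- The left-going path `(k, -2j - k)`, `k ≤ n`, started at the infected site `-2j`, is open
during the first `n` steps. -/
def LeftPathOpen (p : ℝ) (u : Env) (n j : ℕ) : Prop :=
  ∀ k < n, bondOpen p u k (-(2 * (j : ℤ)) - k) false = true

section LeftPath

variable {i i' : ℕ∞} {p : ℝ} {u : Env} {n j k : ℕ} {m : ℤ} (hpath : LeftPathOpen p u n j)
include hpath

lemma Xproc_leftPath (hk : k ≤ n) : Xproc i p u η₀ k (-(2 * (j : ℤ)) - k) = true := by
  induction k with
  | zero =>
    simp only [Xproc, η₀, decide_eq_true_eq]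
    exact ⟨by omega, ⟨-(j : ℤ), by push_cast; ring⟩⟩
  | succ k ih =>
    have hsite : -(2 * (j : ℤ)) - (k + 1 : ℕ) + 1 = -(2 * (j : ℤ)) - k := by push_cast; ring
    simp only [Xproc, hsite, ih (by omega), hpath k (by omega), Bool.and_self, Bool.or_true,
      Bool.true_or]

lemma leftPath_mem_edgeCandidates (hk : k < n) :
    -(2 * (j : ℤ)) - k - 1 ∈ edgeCandidates p u k (Xproc i p u η₀ k) :=
  ⟨_, false, Xproc_leftPath hpath hk.le, hpath k hk, by simp [dir]; ring⟩

lemma neg_two_mul_sub_le_edge (hk : k ≤ n) : -(2 * (j : ℤ)) - k ≤ edge i p u η₀ k := by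
  cases k with
  | zero => simp [edge]
  | succ k =>
    have := le_nextEdge Xproc_bounded (leftPath_mem_edgeCandidates hpath (i := i) hk)
    simp only [edge]
    push_cast
    omega

lemma even_of_Xproc (hk : k ≤ n) (h : Xproc i p u η₀ k m = true) : Even (m + k) := by
  induction k generalizing m with
  | zero =>
    simp only [Xproc, η₀, decide_eq_true_eq] at h
    simpa using h.2
  | succ k ih =>
    have hedge := even_nextEdge_add Xproc_bounded (fun _ => ih (by omega))
      ⟨_, leftPath_mem_edgeCandidates hpath (i := i) (k := k) (by omega)⟩
    simp only [Xproc, Bool.or_eq_true, Bool.and_eq_true] at h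
    rw [Int.even_iff] at hedge ⊢
    rcases h with (⟨h, -⟩ | ⟨h, -⟩) | h
    · have := Int.even_iff.1 (ih (by omega) h); push_cast at this ⊢; omega
    · have := Int.even_iff.1 (ih (by omega) h); push_cast at this ⊢; omega
    · have := Int.even_iff.1 (even_of_forced h); push_cast at this hedge ⊢; omega

lemma even_edge_add (hk : k ≤ n) : Even (edge i p u η₀ k + k) := by
  cases k with
  | zero => simp [edge]
  | succ k =>
    exact even_nextEdge_add Xproc_bounded (fun _ => even_of_Xproc hpath (by omega))
      ⟨_, leftPath_mem_edgeCandidates hpath (by omega)⟩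

lemma Xproc_anti (hi : i ≤ i') (hk : k ≤ n) (h : Xproc i' p u η₀ k m = true) :
    Xproc i p u η₀ k m = true := by
  induction k generalizing m with
  | zero => exact h
  | succ k ih =>
    have hedge : edge i' p u η₀ (k + 1) ≤ edge i p u η₀ (k + 1) :=
      nextEdge_mono (fun _ => ih (by omega)) Xproc_bounded
        ⟨_, leftPath_mem_edgeCandidates hpath (by omega)⟩
    have hpar : Even (edge i p u η₀ (k + 1) - edge i' p u η₀ (k + 1)) := by
      have := (even_edge_add hpath (i := i) hk).sub (even_edge_add hpath (i := i') hk)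
      rwa [add_sub_add_right_eq_sub] at this
    simp only [Xproc, Bool.or_eq_true, Bool.and_eq_true] at h ⊢
    rcases h with (⟨h, hb⟩ | ⟨h, hb⟩) | h
    · exact Or.inl (Or.inl ⟨ih (by omega) h, hb⟩)
    · exact Or.inl (Or.inr ⟨ih (by omega) h, hb⟩)
    · exact Or.inr (forced_anti hi (by simp only [edge] at hedge; omega)
        (by simpa [edge] using hpar) h)

lemma edge_anti (hi : i ≤ i') (hk : k ≤ n) : edge i' p u η₀ k ≤ edge i p u η₀ k := by
  cases k with
  | zero => rfl
  | succ k =>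
    exact nextEdge_mono (fun _ => Xproc_anti hpath hi (by omega)) Xproc_bounded
      ⟨_, leftPath_mem_edgeCandidates hpath (by omega)⟩

lemma edge_eq_edge_top {i : ℕ} (hi : n + j ≤ i) (hk : k ≤ n) :
    edge i p u η₀ k = edge ⊤ p u η₀ k := by
  cases k with
  | zero => rfl
  | succ k =>
    have hT : (k : ℤ) - 2 * i + 1 ≤ edge ⊤ p u η₀ (k + 1) := by
      have := neg_two_mul_sub_le_edge hpath (i := ⊤) hk
      push_cast at this ⊢
      omega
    exact nextEdge_eq_of_agree_above (fun _ => Xproc_anti hpath le_top (by omega))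
      (fun _ hm => Xproc_eq_top_of_lt hm) Xproc_bounded
      ⟨_, leftPath_mem_edgeCandidates hpath (by omega)⟩ hT

lemma abs_edge_le (hk : k ≤ n) : |edge i p u η₀ k| ≤ 2 * (j : ℤ) + k := by
  have := neg_two_mul_sub_le_edge hpath (i := i) hk
  have : edge i p u η₀ k ≤ k := edge_le
  exact abs_le.2 ⟨by omega, by omega⟩

end LeftPath

lemma setOf_bondOpen {Ω : Type*} {ξ : Ω → Env} {p : ℝ} {n : ℕ} {m : ℤ} {j : Bool} :
    {ω | bondOpen p (ξ ω) n m j = true} = (fun ω => ξ ω n m j) ⁻¹' Set.Iic p := by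
  ext ω
  simp [bondOpen]

section Measurability

variable {Ω : Type*} [MeasurableSpace Ω]

lemma measurable_sSup_int {S : Ω → Set ℤ} (hS : ∀ x, MeasurableSet {ω | x ∈ S ω})
    (hbdd : ∀ ω, BddAbove (S ω)) : Measurable fun ω => sSup (S ω) := by
  refine measurable_of_Ioi fun z => ?_
  have : (fun ω => sSup (S ω)) ⁻¹' Set.Ioi z =
      (⋃ x ∈ Set.Ioi z, {ω | x ∈ S ω}) ∪ ((⋂ x, {ω | x ∈ S ω}ᶜ) ∩ {_ω | z < 0}) := by
    ext ω
    rcases (S ω).eq_empty_or_nonempty with h | h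
    · simp [h]
    · simp only [Set.mem_preimage, Set.mem_Ioi, lt_csSup_iff (hbdd ω) h, Set.mem_union,
        Set.mem_iUnion, Set.mem_inter_iff, Set.mem_iInter, Set.mem_compl_iff, Set.mem_ofPred_eq,
        exists_prop]
      exact ⟨fun ⟨x, hx, hzx⟩ => Or.inl ⟨x, hzx, hx⟩, fun h' => h'.elim
        (fun ⟨x, hzx, hx⟩ => ⟨x, hx, hzx⟩) fun ⟨hall, _⟩ => (hall _ h.some_mem).elim⟩
  rw [this]
  exact (MeasurableSet.biUnion (Set.to_countable _) fun x _ => hS x).union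
    ((MeasurableSet.iInter fun x => (hS x).compl).inter (MeasurableSet.const _))

variable {ξ : Ω → Env} (hξ : ∀ n m j, Measurable fun ω => ξ ω n m j) {p : ℝ} {n : ℕ}
include hξ

lemma measurable_bondOpen (m : ℤ) (j : Bool) : Measurable fun ω => bondOpen p (ξ ω) n m j := by
  refine measurable_to_bool ?_
  change MeasurableSet {ω | bondOpen p (ξ ω) n m j = true}
  exact setOf_bondOpen ▸ hξ n m j measurableSet_Iic

lemma measurable_nextEdge {c : Ω → ℤ → Bool} (hc : ∀ m, Measurable fun ω => c ω m) {K : ℤ}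
    (hK : ∀ ω m, c ω m = true → m ≤ K) : Measurable fun ω => nextEdge p (ξ ω) n (c ω) := by
  refine measurable_sSup_int (S := fun ω => edgeCandidates p (ξ ω) n (c ω)) (fun x => ?_)
    (fun ω => bddAbove_edgeCandidates (hK ω))
  have : {ω | x ∈ edgeCandidates p (ξ ω) n (c ω)} = ⋃ (m : ℤ) (j : Bool),
      {ω | c ω m = true} ∩ {ω | bondOpen p (ξ ω) n m j = true} ∩ {_ω | x = m + dir j} := by
    ext ω
    simp [edgeCandidates, and_assoc]
  rw [this]
  exact MeasurableSet.iUnion fun m => MeasurableSet.iUnion fun j =>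
    ((hc m (measurableSet_singleton true)).inter
      (measurable_bondOpen hξ m j (measurableSet_singleton true))).inter (MeasurableSet.const _)

lemma measurable_Xproc (i : ℕ∞) (k : ℕ) (m : ℤ) :
    Measurable fun ω => Xproc i p (ξ ω) η₀ k m := by
  induction k generalizing m with
  | zero => exact measurable_const
  | succ k ih =>
    have := measurable_nextEdge hξ (p := p) (n := k) ih (fun ω _ => Xproc_le (u := ξ ω))
    have := measurable_bondOpen hξ (p := p) (n := k) (m - 1) true
    have := measurable_bondOpen hξ (p := p) (n := k) (m + 1) false
    simp only [Xproc]
    fun_prop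

lemma measurable_edge (i : ℕ∞) (k : ℕ) : Measurable fun ω => edge i p (ξ ω) η₀ k := by
  cases k with
  | zero => exact measurable_const
  | succ k => exact measurable_nextEdge hξ (measurable_Xproc hξ i k) (fun ω _ => Xproc_le)

end Measurability

section Probability

variable {Ω : Type*} {ξ : Ω → Env} {p : ℝ} {n : ℕ}

def leftPathBond (j k : ℕ) : ℕ × ℤ × Bool := (k, -(2 * (j : ℤ)) - k, false)

lemma leftPathBond_injective : Function.Injective fun jk : ℕ × ℕ => leftPathBond jk.1 jk.2 := by
  rintro ⟨j, k⟩ ⟨j', k'⟩ h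
  simp only [leftPathBond, Prod.mk.injEq] at h
  obtain ⟨rfl, h, -⟩ := h
  simp only [Prod.mk.injEq, and_true]
  omega

lemma setOf_leftPathOpen (j : ℕ) : {ω | LeftPathOpen p (ξ ω) n j} =
    ⋂ k ∈ Finset.range n, {ω | bondOpen p (ξ ω) k (-(2 * (j : ℤ)) - k) false = true} := by
  ext ω
  simp [LeftPathOpen]

variable [MeasureSpace Ω] (hξ : UniformBonds ξ)
include hξ

lemma measurableSet_leftPathOpen (j : ℕ) : MeasurableSet {ω | LeftPathOpen p (ξ ω) n j} := by
  rw [setOf_leftPathOpen]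
  exact Finset.measurableSet_biInter _ fun k _ =>
    measurable_bondOpen hξ.2.1 _ _ (measurableSet_singleton true)

variable (hp : p ∈ Set.Ioc (0 : ℝ) 1)
include hp

lemma measure_bondOpen (k : ℕ) (m : ℤ) (j : Bool) :
    ℙ {ω | bondOpen p (ξ ω) k m j = true} = ENNReal.ofReal p := by
  rw [setOf_bondOpen, ← Measure.map_apply (hξ.2.1 k m j) measurableSet_Iic, hξ.2.2.2 k m j,
    Measure.restrict_apply measurableSet_Iic,
    show Set.Iic p ∩ Set.Icc 0 1 = Set.Icc 0 p by grind, Real.volume_Icc, sub_zero]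

lemma measure_biInter_leftPathOpen (s : Finset ℕ) :
    ℙ (⋂ j ∈ s, {ω | LeftPathOpen p (ξ ω) n j}) = ∏ _j ∈ s, ENNReal.ofReal p ^ n := by
  have : (⋂ j ∈ s, {ω | LeftPathOpen p (ξ ω) n j}) = ⋂ v ∈ (s ×ˢ Finset.range n).image
      (fun jk => leftPathBond jk.1 jk.2), {ω | bondOpen p (ξ ω) v.1 v.2.1 v.2.2 = true} := by
    ext ω
    simp only [setOf_leftPathOpen, Finset.set_biInter_finset_image, Finset.mem_product,
      leftPathBond, Set.mem_iInter, Set.mem_ofPred_eq, Finset.mem_range, Prod.forall, and_imp]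
    exact ⟨fun h j k hj hk => h j hj k hk, fun h j hj k hk => h j k hj hk⟩
  rw [this, hξ.2.2.1.meas_biInter fun v _ => ⟨Set.Iic p, measurableSet_Iic, setOf_bondOpen.symm⟩,
    Finset.prod_image fun _ _ _ _ h => leftPathBond_injective h, Finset.prod_product]
  simp [leftPathBond, measure_bondOpen hξ hp]

lemma measure_leftPathOpen (j : ℕ) :
    ℙ {ω | LeftPathOpen p (ξ ω) n j} = ENNReal.ofReal p ^ n := by
  simpa using measure_biInter_leftPathOpen hξ hp {j}

lemma iIndepSet_leftPathOpen : iIndepSet (fun j => {ω | LeftPathOpen p (ξ ω) n j}) ℙ := by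
  refine (iIndepSet_iff_meas_biInter (measurableSet_leftPathOpen hξ)).2 fun s => ?_
  simp only [measure_biInter_leftPathOpen hξ hp, measure_leftPathOpen hξ hp]

lemma measure_biInter_not_leftPathOpen (N : ℕ) :
    ℙ (⋂ j ∈ Finset.range N, {ω | LeftPathOpen p (ξ ω) n j}ᶜ) =
      (1 - ENNReal.ofReal p ^ n) ^ N := by
  have := hξ.1
  rw [(iIndepSet_iff _ _).1 (iIndepSet_leftPathOpen hξ hp) (Finset.range N)
    (f := fun j => {ω | LeftPathOpen p (ξ ω) n j}ᶜ)
    fun j _ => (MeasurableSpace.measurableSet_generateFrom (Set.mem_singleton _)).compl]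
  simp [prob_compl_eq_one_sub (measurableSet_leftPathOpen hξ _), measure_leftPathOpen hξ hp]

end Probability

lemma lintegral_natCast_eq_tsum_measure_lt {Ω : Type*} [MeasurableSpace Ω] {μ : Measure Ω}
    {f : Ω → ℕ} (hf : Measurable f) :
    ∫⁻ ω, (f ω : ℝ≥0∞) ∂μ = ∑' N : ℕ, μ {ω | N < f ω} := by
  have hset : ∀ N : ℕ, MeasurableSet {ω | N < f ω} := fun N => hf measurableSet_Ioi
  have hcount : ∀ ω, (f ω : ℝ≥0∞) = ∑' N : ℕ, {ω | N < f ω}.indicator 1 ω := by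
    intro ω
    rw [tsum_eq_sum (s := Finset.range (f ω)) fun N hN => by simpa using hN]
    simp only [Set.indicator_apply, Set.mem_ofPred_eq, Pi.one_apply]
    rw [Finset.sum_ite_of_true fun N hN => Finset.mem_range.1 hN]
    simp
  simp_rw [hcount]
  rw [lintegral_tsum fun N => (measurable_one.indicator (hset N)).aemeasurable]
  simp [lintegral_indicator_one (hset _)]

section FirstLeftPath

variable {Ω : Type*} {ξ : Ω → Env} {p : ℝ} {n : ℕ}

/-- `sInf ∅ = 0` when no such path is open, which happens only on a null set. -/
def firstLeftPathOpen (p : ℝ) (u : Env) (n : ℕ) : ℕ := sInf {j | LeftPathOpen p u n j}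

lemma setOf_lt_firstLeftPathOpen (N : ℕ) : {ω | N < firstLeftPathOpen p (ξ ω) n} =
    (⋃ j, {ω | LeftPathOpen p (ξ ω) n j}) ∩
      ⋂ j ∈ Set.Iic N, {ω | LeftPathOpen p (ξ ω) n j}ᶜ := by
  ext ω
  rcases Set.eq_empty_or_nonempty {j | LeftPathOpen p (ξ ω) n j} with h | h
  · simp_all [firstLeftPathOpen, Set.eq_empty_iff_forall_notMem]
  · simp only [firstLeftPathOpen, Set.mem_ofPred_eq, ← Nat.add_one_le_iff,
      le_csInf_iff (OrderBot.bddBelow _) h, Set.mem_inter_iff, Set.mem_iUnion, Set.mem_iInter,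
      Set.mem_Iic, Set.mem_compl_iff]
    exact ⟨fun hlt => ⟨h, fun j hj hj' => by have := hlt j hj'; omega⟩,
      fun ⟨_, hall⟩ j hj => by by_contra! hjN; exact hall j (by omega) hj⟩

variable [MeasureSpace Ω] (hξ : UniformBonds ξ)
include hξ

lemma measurable_firstLeftPathOpen : Measurable fun ω => firstLeftPathOpen p (ξ ω) n := by
  refine measurable_of_Ioi fun N => ?_
  change MeasurableSet {ω | N < firstLeftPathOpen p (ξ ω) n}
  rw [setOf_lt_firstLeftPathOpen]
  exact (MeasurableSet.iUnion fun j => measurableSet_leftPathOpen hξ j).inter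
    (.biInter (Set.to_countable _) fun j _ => (measurableSet_leftPathOpen hξ j).compl)

variable (hp : p ∈ Set.Ioc (0 : ℝ) 1)
include hp

lemma ae_leftPathOpen_firstLeftPathOpen :
    ∀ᵐ ω, LeftPathOpen p (ξ ω) n (firstLeftPathOpen p (ξ ω) n) := by
  have hq : ENNReal.ofReal p ^ n ≠ 0 := pow_ne_zero _ (ENNReal.ofReal_pos.2 hp.1).ne'
  have hnone : ℙ {ω | ¬ ∃ j, LeftPathOpen p (ξ ω) n j} = 0 := by
    refine le_antisymm (ge_of_tendsto' (ENNReal.tendsto_pow_atTop_nhds_zero_of_lt_one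
      (ENNReal.sub_lt_self ENNReal.one_ne_top one_ne_zero hq)) fun N => ?_) zero_le
    rw [← measure_biInter_not_leftPathOpen hξ hp N]
    exact measure_mono fun ω hω => by simp_all
  filter_upwards [measure_eq_zero_iff_ae_notMem.1 hnone] with ω hω
  exact Nat.sInf_mem (not_not.1 hω)

lemma integrable_firstLeftPathOpen :
    Integrable (fun ω => (firstLeftPathOpen p (ξ ω) n : ℝ)) := by
  have := hξ.1
  have hq : ENNReal.ofReal p ^ n ≠ 0 := pow_ne_zero _ (ENNReal.ofReal_pos.2 hp.1).ne'
  have hJ := measurable_firstLeftPathOpen (p := p) (n := n) hξ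
  refine ⟨(measurable_of_countable _).comp hJ |>.aestronglyMeasurable, ?_⟩
  simp only [HasFiniteIntegral, Real.enorm_natCast, lintegral_natCast_eq_tsum_measure_lt hJ]
  calc ∑' N : ℕ, ℙ {ω | N < firstLeftPathOpen p (ξ ω) n}
      ≤ ∑' N : ℕ, (1 - ENNReal.ofReal p ^ n) ^ N := by
        refine ENNReal.tsum_le_tsum fun N => ?_
        rw [← measure_biInter_not_leftPathOpen hξ hp, setOf_lt_firstLeftPathOpen]
        exact measure_mono fun ω hω => Set.mem_biInter fun j hj =>
          Set.mem_iInter₂.1 hω.2 j (Set.mem_Iic.2 (Finset.mem_range.1 hj).le)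
    _ < ⊤ := by
        rw [ENNReal.tsum_geometric, ENNReal.sub_sub_cancel ENNReal.one_ne_top
          (pow_le_one₀ zero_le (ENNReal.ofReal_le_one.2 hp.2))]
        exact ENNReal.inv_lt_top.2 (pos_iff_ne_zero.2 hq)

lemma integrable_two_mul_firstLeftPathOpen_add :
    Integrable (fun ω => 2 * (firstLeftPathOpen p (ξ ω) n : ℝ) + n) := by
  have := hξ.1
  exact ((integrable_firstLeftPathOpen hξ hp).const_mul 2).add (integrable_const _)

lemma ae_norm_edge_le (i : ℕ∞) :
    ∀ᵐ ω, ‖(edge i p (ξ ω) η₀ n : ℝ)‖ ≤ 2 * (firstLeftPathOpen p (ξ ω) n : ℝ) + n := by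
  filter_upwards [ae_leftPathOpen_firstLeftPathOpen hξ hp] with ω hω
  rw [Real.norm_eq_abs, ← Int.cast_abs]
  exact_mod_cast abs_edge_le hω le_rfl

lemma integrable_edge (i : ℕ∞) : Integrable (fun ω => (edge i p (ξ ω) η₀ n : ℝ)) :=
  (integrable_two_mul_firstLeftPathOpen_add hξ hp).mono'
    ((measurable_of_countable _).comp (measurable_edge hξ.2.1 i n)).aestronglyMeasurable
    (ae_norm_edge_le hξ hp i)

end FirstLeftPath

/-- **Lemma 3.8.** For every fixed `n ∈ ℕ` and every `p ∈ (0,1]`,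
`E[_pX̄^{(i)}_n] → E[_pX̄^{(∞)}_n]` as `i → ∞`; moreover the convergence is
monotone: the expectations decrease in `i` to the limit. -/
theorem lemma_3_8 {Ω : Type*} [MeasureSpace Ω] (ξ : Ω → Env)
    (hξ : UniformBonds ξ) (p : ℝ) (hp : p ∈ Set.Ioc (0 : ℝ) 1) (n : ℕ) :
    Antitone (fun i : ℕ => ∫ ω, ((edge (i : ℕ∞) p (ξ ω) η₀ n : ℤ) : ℝ) ∂ℙ) ∧
    Tendsto (fun i : ℕ => ∫ ω, ((edge (i : ℕ∞) p (ξ ω) η₀ n : ℤ) : ℝ) ∂ℙ) atTop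
      (nhds (∫ ω, ((edge ⊤ p (ξ ω) η₀ n : ℤ) : ℝ) ∂ℙ)) := by
  have hpath := ae_leftPathOpen_firstLeftPathOpen (n := n) hξ hp
  refine ⟨fun i i' hii => integral_mono_ae (integrable_edge hξ hp _) (integrable_edge hξ hp _) ?_,
    tendsto_integral_of_dominated_convergence _
      (fun i => (integrable_edge hξ hp _).aestronglyMeasurable)
      (integrable_two_mul_firstLeftPathOpen_add hξ hp) (fun i => ae_norm_edge_le hξ hp _) ?_⟩
  · filter_upwards [hpath] with ω hω
    exact_mod_cast edge_anti hω (Nat.cast_le.2 hii) le_rfl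
  · filter_upwards [hpath] with ω hω
    refine tendsto_const_nhds.congr' (eventually_atTop.2 ⟨n + firstLeftPathOpen p (ξ ω) n, ?_⟩)
    exact fun i hi => by simp only [edge_eq_edge_top hω hi le_rfl]
end
end
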